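/- Let P(t) = √6√(2t²+2)/√(2t²+3) and Q(t) = t/(t²+1). The pair a(t) = 0, b(t) = 1/√(t²+1) solves the full invariant Spin(7) instanton system: da/dt = (P·a/t)(b - 1/P) and db/dt = (P/(2t))(1-b²) - (PQ/2)(1-a²) - Qb for all t > 0. -/

import Mathlib

/-- Metric coefficient `P(t) = √6·√(2t²+2)/√(2t²+3)`. -/
noncomputable def Pfun (t : ℝ) : ℝ := Real.sqrt 6 * Real.sqrt (2 * t ^ 2 + 2) / Real.sqrt (2 * t ^ 2 + 3)

/-- Metric coefficient `Q(t) = t/(t²+1)`. -/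
noncomputable def Qfun (t : ℝ) : ℝ := t / (t ^ 2 + 1)

/-!
Since `a ≡ 0`, the first equation is trivial. For `b = (t² + 1)^(-1/2)` one has `1 - b² = tQ`,
so the two `P`-terms of the second equation cancel, leaving `b' = -Qb`, which is the chain rule.
-/
lemma one_sub_inv_sqrt_sq_add_one_sq (t : ℝ) :
    1 - (1 / Real.sqrt (t ^ 2 + 1)) ^ 2 = t * Qfun t := by
  have hpos : (0 : ℝ) < t ^ 2 + 1 := by positivity
  rw [div_pow, Real.sq_sqrt hpos.le, Qfun]
  field_simp
  ring

lemma hasDerivAt_inv_sqrt_sq_add_one (t : ℝ) :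
    HasDerivAt (fun s : ℝ => 1 / Real.sqrt (s ^ 2 + 1))
      (-(Qfun t * (1 / Real.sqrt (t ^ 2 + 1)))) t := by
  have hpos : (0 : ℝ) < t ^ 2 + 1 := by positivity
  have hsqrt_ne : Real.sqrt (t ^ 2 + 1) ≠ 0 := (Real.sqrt_pos.mpr hpos).ne'
  have hsqrt : HasDerivAt (fun s : ℝ => Real.sqrt (s ^ 2 + 1))
      (2 * t / (2 * Real.sqrt (t ^ 2 + 1))) t := by
    refine HasDerivAt.sqrt ?_ hpos.ne'
    simpa using (hasDerivAt_pow 2 t).add_const 1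
  have hinv : HasDerivAt (fun s : ℝ => 1 / Real.sqrt (s ^ 2 + 1))
      (-(2 * t / (2 * Real.sqrt (t ^ 2 + 1))) / Real.sqrt (t ^ 2 + 1) ^ 2) t := by
    simpa only [one_div] using hsqrt.fun_inv hsqrt_ne
  refine hinv.congr_deriv ?_
  rw [Real.sq_sqrt hpos.le, Qfun]
  field_simp

/-- The pair `a(t) = 0`, `b(t) = 1/√(t²+1)` solves the full invariant Spin(7) instanton system
`da/dt = (Pa/t)(b - 1/P)`, `db/dt = (P/(2t))(1-b²) - (PQ/2)(1-a²) - Qb` for all `t > 0`.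
This is the HYM connection `A_HYM_π₁`. -/
theorem hym_pi1_solves_spin7_system :
    ∀ t > (0 : ℝ),
      HasDerivAt (fun _ : ℝ => (0 : ℝ))
        (Pfun t * (0 : ℝ) / t * ((1 / Real.sqrt (t ^ 2 + 1)) - 1 / Pfun t)) t ∧
      HasDerivAt (fun s : ℝ => 1 / Real.sqrt (s ^ 2 + 1))
        (Pfun t / (2 * t) * (1 - (1 / Real.sqrt (t ^ 2 + 1)) ^ 2) -
          Pfun t * Qfun t / 2 * (1 - (0 : ℝ) ^ 2) - Qfun t * (1 / Real.sqrt (t ^ 2 + 1))) t := by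
  intro t ht
  constructor
  · simpa using hasDerivAt_const t (0 : ℝ)
  · have hcancel : Pfun t / (2 * t) * (1 - (1 / Real.sqrt (t ^ 2 + 1)) ^ 2) =
        Pfun t * Qfun t / 2 * (1 - (0 : ℝ) ^ 2) := by
      have ht0 : t ≠ 0 := ht.ne'
      rw [one_sub_inv_sqrt_sq_add_one_sq]
      field_simp
      ring
    rw [hcancel, sub_self, zero_sub]
    exact hasDerivAt_inv_sqrt_sq_add_one t
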